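/- A graph G is homogeneously traceable if and only if the join K_1 ∇ G is Hamiltonian-connected. -/

import Mathlib

open SimpleGraph Finset Matrix

variable {V : Type*} [Fintype V] [DecidableEq V]

def SimpleGraph.IsHamiltonianConnected (G : SimpleGraph V) : Prop :=
  ∀ u v : V, u ≠ v → ∃ p : G.Walk u v, p.IsHamiltonian

def SimpleGraph.IsTraceable (G : SimpleGraph V) : Prop :=
  ∃ (u v : V) (p : G.Walk u v), p.IsHamiltonian

def SimpleGraph.IsHomogeneouslyTraceable (G : SimpleGraph V) : Prop :=
  ∀ u : V, ∃ (v : V) (p : G.Walk u v), p.IsHamiltonian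

/-- `G` is `k`-connected: more than `k` vertices, and removing fewer than `k`
vertices leaves a connected graph. -/
def SimpleGraph.IsKConnected (G : SimpleGraph V) (k : ℕ) : Prop :=
  k < Fintype.card V ∧
    ∀ S : Finset V, S.card < k → (G.induce ((↑S : Set V)ᶜ)).Connected

def SimpleGraph.IsIndependentSet (G : SimpleGraph V) (s : Finset V) : Prop :=
  ∀ u ∈ s, ∀ v ∈ s, ¬ G.Adj u v

noncomputable def lapHerm (G : SimpleGraph V) [DecidableRel G.Adj] :
    (G.lapMatrix ℝ).IsHermitian := (G.posSemidef_lapMatrix ℝ).1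

/-- Laplacian spectral radius μ₁. -/
noncomputable def lapSpecRad (G : SimpleGraph V) [DecidableRel G.Adj] : ℝ :=
  ⨆ i, (lapHerm G).eigenvalues i

noncomputable def adjHerm (G : SimpleGraph V) [DecidableRel G.Adj] :
    (G.adjMatrix ℝ).IsHermitian := by
  rw [Matrix.IsHermitian, conjTranspose_eq_transpose_of_trivial, isSymm_adjMatrix]

/-- Adjacency spectral radius λ₁. -/
noncomputable def adjSpecRad (G : SimpleGraph V) [DecidableRel G.Adj] : ℝ :=
  ⨆ i, (adjHerm G).eigenvalues i

/-- Smallest adjacency eigenvalue λ_n. -/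
noncomputable def adjSpecMin (G : SimpleGraph V) [DecidableRel G.Adj] : ℝ :=
  ⨅ i, (adjHerm G).eigenvalues i

/-- The join `K₁ ∇ G`: a new universal vertex added to `G`. -/
def joinK1 (G : SimpleGraph V) : SimpleGraph (Option V) where
  Adj a b := match a, b with
    | none, none => False
    | none, some _ => True
    | some _, none => True
    | some u, some v => G.Adj u v
  symm := ⟨by rintro (_|u) (_|v) h <;> simp_all [G.adj_symm]⟩
  loopless := ⟨by rintro (_|u) h <;> simp_all⟩

/-
Write `∗` for the new vertex of `K₁ ∇ G`. A Hamiltonian path `a ⋯ c` of `G` yields the Hamiltonian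
path `∗ c ⋯ a` of the join, and, for `b ≠ a`, cutting it as `a ⋯ x b ⋯ c` yields `a ⋯ x ∗ c ⋯ b`.
Conversely, removing the endpoint `∗` from a Hamiltonian path of the join from `u` to `∗` leaves
a Hamiltonian path of `G` starting at `u`. In each case the walks are compared through their
supports: a walk of the join whose support is a permutation of `∗` followed by the support of a
walk `p` of `G` is Hamiltonian iff `p` is.
-/

namespace SimpleGraph.Walk

variable {α β : Type*} {G : SimpleGraph α} {H : SimpleGraph β}

lemma IsHamiltonian.reverse [DecidableEq α] {a b : α} {p : G.Walk a b}
    (hp : p.IsHamiltonian) : p.reverse.IsHamiltonian := fun x => by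
  rw [support_reverse, List.count_reverse]
  exact hp x

lemma exists_support_eq_append_of_mem_support [DecidableEq α] {a b c : α} (p : G.Walk a c)
    (hb : b ∈ p.support) (hab : a ≠ b) :
    ∃ (x : α) (r : G.Walk a x) (d : G.Walk b c), p.support = r.support ++ d.support := by
  set t := p.takeUntil b hb
  have ht : ¬ t.Nil := not_nil_of_ne hab
  refine ⟨_, t.dropLast, p.dropUntil b hb, ?_⟩
  conv_lhs => rw [← p.take_spec hb, support_append, ← support_dropLast_concat ht]
  rw [← cons_tail_support (p.dropUntil b hb)]
  simp

lemma exists_support_map_eq_of_subset_range (f : G ↪g H) {x y : β} (r : H.Walk x y)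
    (hr : ∀ z ∈ r.support, z ∈ Set.range f) :
    ∃ (a b : α) (q : G.Walk a b), f a = x ∧ f b = y ∧ q.support.map f = r.support := by
  induction r with
  | nil =>
    obtain ⟨a, rfl⟩ := hr _ (start_mem_support _)
    exact ⟨a, a, nil, rfl, rfl, rfl⟩
  | cons hxv r ih =>
    obtain ⟨a, rfl⟩ := hr _ (start_mem_support _)
    obtain ⟨a', b, q, rfl, rfl, hq⟩ := ih fun z hz => hr z (List.mem_cons_of_mem _ hz)
    exact ⟨a, b, cons (f.map_adj_iff.mp hxv) q, rfl, rfl, by simp [hq]⟩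

end SimpleGraph.Walk

section joinK1

variable {α : Type*} {G : SimpleGraph α}

lemma joinK1_adj_none_some (c : α) : (joinK1 G).Adj none (some c) := trivial

lemma joinK1_adj_some_none (c : α) : (joinK1 G).Adj (some c) none := trivial

abbrev joinK1Hom (G : SimpleGraph α) : G →g joinK1 G := ⟨some, id⟩

@[simp] lemma coe_joinK1Hom : ⇑(joinK1Hom G) = some := rfl

variable [DecidableEq α]

lemma isHamiltonian_joinK1_iff {a b : Option α} {u v : α} {W : (joinK1 G).Walk a b}
    {p : G.Walk u v} (h : W.support.Perm (none :: p.support.map some)) :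
    W.IsHamiltonian ↔ p.IsHamiltonian := by
  -- `IsHamiltonian` counts with the `BEq` of `DecidableEq`, not with `Option.instBEq`
  have hc (x : Option α) := @List.Perm.count_eq _ instBEqOfDecidableEq _ _ h x
  simp only [Walk.IsHamiltonian, Option.forall, hc]
  simp [List.count_eq_zero,
    @List.count_map_of_injective _ _ _ _ instBEqOfDecidableEq _ _ _ (Option.some_injective α)]

lemma exists_isHamiltonian_joinK1_none_some {a c : α} {p : G.Walk a c}
    (hp : p.IsHamiltonian) : ∃ W : (joinK1 G).Walk none (some a), W.IsHamiltonian :=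
  ⟨.cons (joinK1_adj_none_some c) (p.reverse.map (joinK1Hom G)),
    (isHamiltonian_joinK1_iff (by simp)).mpr hp⟩

lemma exists_isHamiltonian_joinK1_some_some {a b c : α} {p : G.Walk a c}
    (hp : p.IsHamiltonian) (hab : a ≠ b) :
    ∃ W : (joinK1 G).Walk (some a) (some b), W.IsHamiltonian := by
  obtain ⟨x, r, d, hsupp⟩ := p.exists_support_eq_append_of_mem_support (hp.mem_support b) hab
  refine ⟨(r.map (joinK1Hom G)).append <| .cons (joinK1_adj_some_none x) <|
    .cons (joinK1_adj_none_some c) (d.reverse.map (joinK1Hom G)), ?_⟩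
  refine (isHamiltonian_joinK1_iff ?_).mpr hp
  simp only [Walk.support_append, Walk.support_cons, Walk.support_map, Walk.support_reverse,
    coe_joinK1Hom, List.tail_cons, hsupp, List.map_append, List.map_reverse]
  exact List.perm_middle.trans (((List.reverse_perm _).append_left _).cons _)

lemma exists_isHamiltonian_of_isHamiltonian_joinK1 {u : α}
    {W : (joinK1 G).Walk (some u) none} (hW : W.IsHamiltonian) :
    ∃ (v : α) (q : G.Walk u v), q.IsHamiltonian := by
  have hW_not_nil : ¬ W.Nil := Walk.not_nil_of_ne (by simp)
  have hsupp := Walk.support_dropLast_concat hW_not_nil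
  have hsome : ∀ z ∈ W.dropLast.support, z ≠ none := by
    have := hW.isPath.support_nodup
    rw [← hsupp, List.nodup_append] at this
    simpa using this.2.2
  obtain ⟨a, b, q, ha, -, hq⟩ := W.dropLast.exists_support_map_eq_of_subset_range
    (⟨Function.Embedding.some, Iff.rfl⟩ : G ↪g joinK1 G)
    fun z hz => Option.ne_none_iff_exists.mp (hsome z hz)
  obtain rfl : a = u := Option.some_injective _ ha
  refine ⟨b, q, (isHamiltonian_joinK1_iff ?_).mp hW⟩
  rw [← hsupp, ← hq]
  exact List.perm_append_singleton _ _

end joinK1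

theorem homogeneously_traceable_iff_join_hamiltonian_connected (G : SimpleGraph V) :
    G.IsHomogeneouslyTraceable ↔ (joinK1 G).IsHamiltonianConnected := by
  refine ⟨fun hG x y hxy => ?_, fun hJ u => ?_⟩
  · rcases x with _ | a <;> rcases y with _ | b
    · exact absurd rfl hxy
    · obtain ⟨c, p, hp⟩ := hG b
      exact exists_isHamiltonian_joinK1_none_some hp
    · obtain ⟨c, p, hp⟩ := hG a
      obtain ⟨W, hW⟩ := exists_isHamiltonian_joinK1_none_some hp
      exact ⟨W.reverse, hW.reverse⟩
    · obtain ⟨c, p, hp⟩ := hG a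
      exact exists_isHamiltonian_joinK1_some_some hp (Option.some_injective _ |>.ne_iff.mp hxy)
  · obtain ⟨W, hW⟩ := hJ (some u) none (Option.some_ne_none u)
    exact exists_isHamiltonian_of_isHamiltonian_joinK1 hW
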